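/- For real x > 0 with x not an integer and Re assumptions as stated, the Laplace transform of Δ(x) satisfies, for real s > 0: ∫_0^∞ Δ(x) e^{-sx} dx = (1/s) ∑_{n=1}^∞ d(n) e^{-sn} + (log s − γ)/s² − 1/(4s). -/

import Mathlib

open Real MeasureTheory

/-- The error term in the Dirichlet divisor problem. -/
noncomputable def divisorError (x : ℝ) : ℝ :=
  (∑ n ∈ Finset.Icc 1 ⌊x⌋₊, ((n.divisors.card : ℝ)))
    - x * (Real.log x + 2 * Real.eulerMascheroniConstant - 1) - 1 / 4

/-!
Write `Δ(x) e^{-sx}` as `D(x) e^{-sx}` minus elementary terms, where `D(x) = ∑_{n ≤ x} d(n)`.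
Since `D(x) = ∑_{n ≥ 1} d(n) 1_{x ≥ n}` and `d(n) ≤ n`, summation and integration may be
interchanged, giving `∫_0^∞ D(x) e^{-sx} dx = s⁻¹ ∑ d(n) e^{-sn}`. The other terms are Gamma
integrals: `∫_0^∞ x e^{-sx} dx = 1/s²` and, substituting `t = sx`,
`∫_0^∞ x log x e^{-sx} dx = (Γ'(2) - log s)/s²` with `Γ'(2) = 1 - γ`.
-/

open Set

section ExponentialMoments

variable {s : ℝ}

lemma integrableOn_pow_mul_exp_neg_mul_Ioi (k : ℕ) (hs : 0 < s) :
    IntegrableOn (fun x => x ^ k * exp (-s * x)) (Ioi 0) := by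
  simpa [Real.rpow_natCast] using integrableOn_rpow_mul_exp_neg_mul_rpow (s := k) (p := 1)
    (neg_one_lt_zero.trans_le k.cast_nonneg) one_pos hs

lemma integral_exp_neg_mul_Ioi (hs : 0 < s) (c : ℝ) :
    ∫ x in Ioi c, exp (-s * x) = exp (-s * c) / s := by
  rw [integral_exp_mul_Ioi (neg_lt_zero.mpr hs), neg_div_neg_eq]

lemma integral_mul_exp_neg_mul_Ioi (hs : 0 < s) :
    ∫ x in Ioi 0, x * exp (-s * x) = 1 / s ^ 2 := by
  have := integral_rpow_mul_exp_neg_mul_Ioi two_pos hs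
  norm_num [Real.Gamma_two] at this
  simpa [neg_mul] using this

lemma abs_mul_log_le_sq_add_one {x : ℝ} (hx : 0 < x) : |x * log x| ≤ x ^ 2 + 1 := by
  rcases le_total x 1 with hx1 | hx1
  · rw [mul_comm]
    linarith [abs_log_mul_self_lt x hx hx1, sq_nonneg x]
  · have hlog : 0 ≤ log x := log_nonneg hx1
    rw [abs_of_nonneg (mul_nonneg hx.le hlog)]
    nlinarith [log_le_sub_one_of_pos hx]

lemma integrableOn_mul_log_mul_exp_neg_mul_Ioi (hs : 0 < s) :
    IntegrableOn (fun x => x * log x * exp (-s * x)) (Ioi 0) := by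
  refine Integrable.mono' ((integrableOn_pow_mul_exp_neg_mul_Ioi 2 hs).add
    (exp_neg_integrableOn_Ioi 0 hs)) ?_ ?_
  · exact (ContinuousOn.mul (continuousOn_id.mul (continuousOn_log.mono fun x hx => hx.ne'))
      (by fun_prop)).aestronglyMeasurable measurableSet_Ioi
  · filter_upwards [ae_restrict_mem measurableSet_Ioi] with x hx
    rw [norm_mul, norm_of_nonneg (exp_pos _).le, Pi.add_apply, ← add_one_mul]
    exact mul_le_mul_of_nonneg_right (abs_mul_log_le_sq_add_one hx) (exp_pos _).le

lemma integral_mul_log_mul_exp_neg_Ioi :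
    ∫ t in Ioi (0 : ℝ), t * log t * exp (-t) = 1 - eulerMascheroniConstant := by
  set I := ∫ t in Ioi (0 : ℝ), t * log t * exp (-t) with hI_def
  have hΓ : HasDerivAt Gamma (1 - eulerMascheroniConstant) 2 := by
    convert hasDerivAt_Gamma_nat 1 using 1 <;> norm_num; ring
  have hGammaIntegral : HasDerivAt (fun y : ℝ => Complex.GammaIntegral y) (I : ℂ) 2 := by
    convert (Complex.hasDerivAt_GammaIntegral (s := 2) (by norm_num)).comp_ofReal using 2
    · rw [hI_def, ← integral_complex_ofReal]
      refine setIntegral_congr_fun measurableSet_Ioi fun t _ => ?_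
      push_cast
      norm_num
      ring
    · simp
  have hΓI : HasDerivAt (fun y : ℝ => (Gamma y : ℂ)) (I : ℂ) 2 := by
    refine hGammaIntegral.congr_of_eventuallyEq ?_
    filter_upwards [eventually_gt_nhds two_pos] with y hy
    rw [← Complex.Gamma_ofReal, Complex.Gamma_eq_integral (by rw [Complex.ofReal_re]; linarith)]
  exact_mod_cast hΓI.unique hΓ.ofReal_comp

lemma integral_mul_log_mul_exp_neg_mul_Ioi (hs : 0 < s) :
    ∫ x in Ioi 0, x * log x * exp (-s * x) = (1 - eulerMascheroniConstant - log s) / s ^ 2 := by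
  have hsub : ∀ x, s * x / s * log (s * x / s) * exp (-(s * x)) =
      x * log x * exp (-s * x) := fun x => by rw [mul_div_cancel_left₀ _ hs.ne', neg_mul]
  have hsplit : ∀ t ∈ Ioi (0 : ℝ), t / s * log (t / s) * exp (-t) =
      s⁻¹ * (t * log t * exp (-t)) - s⁻¹ * log s * (t * exp (-t)) := fun t ht => by
    rw [log_div (ne_of_gt ht) hs.ne']
    ring
  have hL : IntegrableOn (fun t => t * log t * exp (-t)) (Ioi 0) := by
    simpa using integrableOn_mul_log_mul_exp_neg_mul_Ioi one_pos
  have hX : IntegrableOn (fun t => t * exp (-t)) (Ioi 0) := by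
    simpa using integrableOn_pow_mul_exp_neg_mul_Ioi 1 one_pos
  have hX1 : ∫ t in Ioi 0, t * exp (-t) = 1 := by
    simpa using integral_mul_exp_neg_mul_Ioi one_pos
  rw [← funext hsub, integral_comp_mul_left_Ioi (fun t => t / s * log (t / s) * exp (-t)) 0 hs,
    mul_zero, setIntegral_congr_fun measurableSet_Ioi hsplit,
    integral_sub (hL.const_mul _) (hX.const_mul _), integral_const_mul, integral_const_mul,
    integral_mul_log_mul_exp_neg_Ioi, hX1, smul_eq_mul]
  field_simp

end ExponentialMoments

section SummatoryFunction

variable (a : ℕ → ℝ) {s C : ℝ} {k : ℕ}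

lemma abs_sum_Icc_floor_le (ha : ∀ n, |a n| ≤ C * n ^ k) {x : ℝ} (hx : 0 ≤ x) :
    |∑ n ∈ Finset.Icc 1 ⌊x⌋₊, a n| ≤ C * x ^ (k + 1) := by
  have hC : 0 ≤ C := by simpa using (abs_nonneg _).trans (ha 1)
  calc |∑ n ∈ Finset.Icc 1 ⌊x⌋₊, a n|
      ≤ ∑ n ∈ Finset.Icc 1 ⌊x⌋₊, |a n| := Finset.abs_sum_le_sum_abs _ _
    _ ≤ ∑ _n ∈ Finset.Icc 1 ⌊x⌋₊, C * x ^ k := by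
        refine Finset.sum_le_sum fun n hn => (ha n).trans ?_
        obtain ⟨hn1, hnx⟩ := Finset.mem_Icc.mp hn
        have : (n : ℝ) ≤ x := (Nat.le_floor_iff' (Nat.one_le_iff_ne_zero.mp hn1)).mp hnx
        gcongr
    _ = ⌊x⌋₊ * (C * x ^ k) := by simp
    _ ≤ x * (C * x ^ k) := by gcongr; exact Nat.floor_le hx
    _ = C * x ^ (k + 1) := by ring

lemma integrableOn_sum_Icc_floor_mul_exp_neg_mul (ha : ∀ n, |a n| ≤ C * n ^ k) (hs : 0 < s) :
    IntegrableOn (fun x => (∑ n ∈ Finset.Icc 1 ⌊x⌋₊, a n) * exp (-s * x)) (Ioi 0) := by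
  refine Integrable.mono' ((integrableOn_pow_mul_exp_neg_mul_Ioi (k + 1) hs).const_mul C) ?_ ?_
  · have hA : Measurable fun x : ℝ => ∑ n ∈ Finset.Icc 1 ⌊x⌋₊, a n :=
      (measurable_from_top (f := fun m : ℕ => ∑ n ∈ Finset.Icc 1 m, a n)).comp Nat.measurable_floor
    exact (hA.mul (by fun_prop)).aestronglyMeasurable
  · filter_upwards [ae_restrict_mem measurableSet_Ioi] with x hx
    rw [norm_mul, norm_of_nonneg (exp_pos _).le, ← mul_assoc]
    exact mul_le_mul_of_nonneg_right (abs_sum_Icc_floor_le a ha (le_of_lt hx)) (exp_pos _).le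

lemma tsum_indicator_Ici_succ_mul (g : ℝ → ℝ) (x : ℝ) :
    ∑' n : ℕ, (Ici ((n + 1 : ℕ) : ℝ)).indicator (fun y => a (n + 1) * g y) x =
      (∑ n ∈ Finset.Icc 1 ⌊x⌋₊, a n) * g x := by
  have hmem : ∀ n : ℕ, x ∈ Ici ((n + 1 : ℕ) : ℝ) ↔ n ∈ Finset.range ⌊x⌋₊ := fun n => by
    rw [mem_Ici, Finset.mem_range, ← Nat.le_floor_iff' n.succ_ne_zero, Nat.succ_le_iff]
  rw [tsum_eq_sum (s := Finset.range ⌊x⌋₊) fun n hn => indicator_of_notMem (by rwa [hmem]) _,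
    Finset.sum_congr rfl fun n hn => indicator_of_mem ((hmem n).mpr hn) _, ← Finset.sum_mul,
    Finset.range_eq_Ico, Finset.sum_Ico_add' a, zero_add, Finset.Ico_add_one_right_eq_Icc]

lemma setIntegral_Ioi_zero_indicator_Ici_mul_exp (hs : 0 < s) {c : ℝ} (hc : 0 < c) (b : ℝ) :
    ∫ x in Ioi 0, (Ici c).indicator (fun x => b * exp (-s * x)) x = b * exp (-s * c) / s := by
  rw [integral_indicator measurableSet_Ici, Measure.restrict_restrict measurableSet_Ici,
    inter_eq_left.mpr (Ici_subset_Ioi.mpr hc), integral_Ici_eq_integral_Ioi,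
    integral_const_mul, integral_exp_neg_mul_Ioi hs, mul_div_assoc]

lemma integral_sum_Icc_floor_mul_exp_neg_mul (ha : ∀ n, |a n| ≤ C * n ^ k) (hs : 0 < s) :
    ∫ x in Ioi 0, (∑ n ∈ Finset.Icc 1 ⌊x⌋₊, a n) * exp (-s * x) =
      (1 / s) * ∑' n : ℕ+, a n * exp (-s * n) := by
  set F : ℕ → ℝ → ℝ := fun n =>
    (Ici ((n + 1 : ℕ) : ℝ)).indicator (fun x => a (n + 1) * exp (-s * x))
  have hpos : ∀ n : ℕ, (0 : ℝ) < (n + 1 : ℕ) := fun n => Nat.cast_pos.mpr n.succ_pos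
  have hF_int : ∀ n, Integrable (F n) (volume.restrict (Ioi 0)) := fun n =>
    ((exp_neg_integrableOn_Ioi 0 hs).const_mul _).indicator measurableSet_Ici
  have hF_norm : ∀ n, ∫ x in Ioi 0, ‖F n x‖ = |a (n + 1)| * exp (-s * (n + 1 : ℕ)) / s :=
    fun n => by
      simp only [F, norm_indicator_eq_indicator_norm, norm_mul, norm_of_nonneg (exp_pos _).le,
        Real.norm_eq_abs]
      exact setIntegral_Ioi_zero_indicator_Ici_mul_exp hs (hpos n) _
  have hsum : Summable fun n : ℕ => |a n| * exp (-s * n) :=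
    ((summable_pow_mul_exp_neg_nat_mul k hs).mul_left C).of_nonneg_of_le
      (fun n => by positivity) fun n => by
        rw [← mul_assoc]
        exact mul_le_mul_of_nonneg_right (ha n) (exp_pos _).le
  have hF_sum : Summable fun n => ∫ x in Ioi 0, ‖F n x‖ := by
    simpa only [hF_norm] using ((summable_nat_add_iff 1).mpr hsum).div_const s
  rw [← integral_congr_ae (ae_of_all _ (tsum_indicator_Ici_succ_mul a _)),
    ← integral_tsum_of_summable_integral_norm hF_int hF_sum,
    tsum_pnat_eq_tsum_succ (f := fun n => a n * exp (-s * n)),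
    ← tsum_mul_left]
  congr 1 with n
  rw [setIntegral_Ioi_zero_indicator_Ici_mul_exp hs (hpos n)]
  ring

end SummatoryFunction

/-- The Laplace transform of `Δ(x)`:
`∫_0^∞ Δ(x) e^{-sx} dx = (1/s) ∑_{n≥1} d(n) e^{-sn} + (log s − γ)/s² − 1/(4s)`. -/
theorem laplace_divisorError (s : ℝ) (hs : 0 < s) :
    ∫ x in Set.Ioi (0 : ℝ), divisorError x * Real.exp (-s * x)
      = (1 / s) * (∑' n : ℕ+, ((n : ℕ).divisors.card : ℝ) * Real.exp (-s * n))
        + (Real.log s - Real.eulerMascheroniConstant) / s ^ 2 - 1 / (4 * s) := by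
  set d : ℕ → ℝ := fun n => (n.divisors.card : ℝ)
  have hd : ∀ n, |d n| ≤ 1 * n ^ 1 := fun n => by
    simpa [d] using n.card_divisors_le_self
  have hsplit : ∀ x, divisorError x * exp (-s * x) =
      (∑ n ∈ Finset.Icc 1 ⌊x⌋₊, d n) * exp (-s * x) - x * log x * exp (-s * x)
        - (2 * eulerMascheroniConstant - 1) * (x * exp (-s * x)) - 1 / 4 * exp (-s * x) :=
    fun x => by rw [divisorError]; ring
  have hD := integrableOn_sum_Icc_floor_mul_exp_neg_mul d hd hs
  have hL := integrableOn_mul_log_mul_exp_neg_mul_Ioi hs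
  have hX : IntegrableOn (fun x => x * exp (-s * x)) (Ioi 0) := by
    simpa using integrableOn_pow_mul_exp_neg_mul_Ioi 1 hs
  have hE := exp_neg_integrableOn_Ioi 0 hs
  simp only [hsplit]
  rw [integral_sub ((hD.sub' hL).sub' (hX.const_mul _)) (hE.const_mul _),
    integral_sub (hD.sub' hL) (hX.const_mul _), integral_sub hD hL,
    integral_sum_Icc_floor_mul_exp_neg_mul d hd hs, integral_mul_log_mul_exp_neg_mul_Ioi hs,
    integral_const_mul, integral_const_mul, integral_mul_exp_neg_mul_Ioi hs,
    integral_exp_neg_mul_Ioi hs, mul_zero, exp_zero]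
  field_simp
  ring
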